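/- arXiv:2604.02643 — 2 statements merged into one kernel-verified Lean document; each statement's English description precedes it below -/
import Mathlib

section
/- Let τ > 0, κ ∈ ℝ, and let a ∈ ℝ^{N_a}, b ∈ ℝ^{N_b}, c ∈ ℝ^{N_c} be the projected coordinates of three polygons (N_a, N_b, N_c ≥ 1). Define the two directional terms ρ̃_1 = m̃in_τ(b) − m̃ax_τ(a) − κ and ρ̃_2 = m̃in_τ(c) − m̃ax_τ(b) − κ, and the smoothed Between robustness ρ̃ = m̃in_τ(ρ̃_1, ρ̃_2) (smooth minimum of the pair), where m̃ax_τ(x) = τ·log(∑ exp(x_i/τ)) and m̃in_τ(x) = −m̃ax_τ(−x). Define the exact robustness ρ = min( min_i(b_i) − max_i(a_i) − κ, min_i(c_i) − max_i(b_i) − κ ). Then ρ̃ ≤ ρ; in particular ρ̃ > 0 implies ρ > 0. -/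
/-- LogSumExp smooth maximum with temperature `τ`. -/
noncomputable def smoothMax (τ : ℝ) {N : ℕ} (x : Fin N → ℝ) : ℝ :=
  τ * Real.log (∑ i, Real.exp (x i / τ))

/-- LogSumExp smooth minimum with temperature `τ`: `smoothMin τ x = −smoothMax τ (−x)`. -/
noncomputable def smoothMin (τ : ℝ) {N : ℕ} (x : Fin N → ℝ) : ℝ :=
  -smoothMax τ (fun i => -x i)

/-- Binary LogSumExp smooth minimum. -/
noncomputable def smoothMin2 (τ a b : ℝ) : ℝ :=
  smoothMin τ (fun i : Fin 2 => if i = 0 then a else b)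

/-!
Each LogSumExp term dominates the largest of its summands, so `smoothMax τ x ≥ max x` and
dually `smoothMin τ x ≤ min x`. The smoothed Between robustness is built from these by
subtraction (antitone in `smoothMax`, monotone in `smoothMin`) and a final smooth minimum,
so every relaxation errs on the same side and `ρ̃ ≤ ρ`.
-/

section LogSumExp

variable {τ : ℝ} {N : ℕ}

theorem le_smoothMax (hτ : 0 < τ) (x : Fin N → ℝ) (j : Fin N) : x j ≤ smoothMax τ x := by
  have hsum : Real.exp (x j / τ) ≤ ∑ i, Real.exp (x i / τ) :=
    Finset.single_le_sum (fun i _ => (Real.exp_pos (x i / τ)).le) (Finset.mem_univ j)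
  have hlog : x j / τ ≤ Real.log (∑ i, Real.exp (x i / τ)) :=
    (Real.le_log_iff_exp_le ((Real.exp_pos _).trans_le hsum)).mpr hsum
  rw [smoothMax, ← div_le_iff₀' hτ]
  exact hlog

theorem smoothMin_le (hτ : 0 < τ) (x : Fin N → ℝ) (j : Fin N) : smoothMin τ x ≤ x j :=
  neg_le.mp (le_smoothMax hτ (fun i => -x i) j)

theorem sup'_le_smoothMax (hτ : 0 < τ) (x : Fin N → ℝ)
    (h : (Finset.univ : Finset (Fin N)).Nonempty) :
    Finset.univ.sup' h x ≤ smoothMax τ x :=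
  Finset.sup'_le h x fun j _ => le_smoothMax hτ x j

theorem smoothMin_le_inf' (hτ : 0 < τ) (x : Fin N → ℝ)
    (h : (Finset.univ : Finset (Fin N)).Nonempty) :
    smoothMin τ x ≤ Finset.univ.inf' h x :=
  Finset.le_inf' h x fun j _ => smoothMin_le hτ x j

theorem smoothMin2_le_min (hτ : 0 < τ) (a b : ℝ) : smoothMin2 τ a b ≤ min a b :=
  le_min (smoothMin_le hτ _ 0) (smoothMin_le hτ _ 1)

end LogSumExp

/-- Theorem 1, Case (i) for the Between predicate: with
`ρ̃₁ = smoothMin τ b − smoothMax τ a − κ`, `ρ̃₂ = smoothMin τ c − smoothMax τ b − κ`,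
and `ρ̃ = smoothMin τ (ρ̃₁, ρ̃₂)`, the nested smoothed robustness `ρ̃` never exceeds the
exact robustness `ρ = min(min b − max a − κ, min c − max b − κ)`;
in particular `ρ̃ > 0 → ρ > 0`. -/
theorem between_conservative (Na Nb Nc : ℕ) (hNa : 1 ≤ Na) (hNb : 1 ≤ Nb) (hNc : 1 ≤ Nc)
    (τ : ℝ) (hτ : 0 < τ) (κ : ℝ)
    (a : Fin Na → ℝ) (b : Fin Nb → ℝ) (c : Fin Nc → ℝ) :
    smoothMin2 τ (smoothMin τ b - smoothMax τ a - κ) (smoothMin τ c - smoothMax τ b - κ)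
      ≤ min
        (Finset.univ.inf' (Finset.univ_nonempty_iff.mpr (Fin.pos_iff_nonempty.mp hNb)) b
          - Finset.univ.sup' (Finset.univ_nonempty_iff.mpr (Fin.pos_iff_nonempty.mp hNa)) a - κ)
        (Finset.univ.inf' (Finset.univ_nonempty_iff.mpr (Fin.pos_iff_nonempty.mp hNc)) c
          - Finset.univ.sup' (Finset.univ_nonempty_iff.mpr (Fin.pos_iff_nonempty.mp hNb)) b - κ) ∧
    (0 < smoothMin2 τ (smoothMin τ b - smoothMax τ a - κ)
          (smoothMin τ c - smoothMax τ b - κ) →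
      0 < min
        (Finset.univ.inf' (Finset.univ_nonempty_iff.mpr (Fin.pos_iff_nonempty.mp hNb)) b
          - Finset.univ.sup' (Finset.univ_nonempty_iff.mpr (Fin.pos_iff_nonempty.mp hNa)) a - κ)
        (Finset.univ.inf' (Finset.univ_nonempty_iff.mpr (Fin.pos_iff_nonempty.mp hNc)) c
          - Finset.univ.sup' (Finset.univ_nonempty_iff.mpr (Fin.pos_iff_nonempty.mp hNb)) b - κ)) := by
  refine ⟨?conservative, fun hpos => hpos.trans_le ?conservative⟩
  exact (smoothMin2_le_min hτ _ _).trans <| min_le_min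
    (sub_le_sub_right (sub_le_sub (smoothMin_le_inf' hτ b _) (sup'_le_smoothMax hτ a _)) κ)
    (sub_le_sub_right (sub_le_sub (smoothMin_le_inf' hτ c _) (sup'_le_smoothMax hτ b _)) κ)
end

section
/- Let N ≥ 1, τ > 0, δ_in ∈ ℝ, δ ≥ 0, and let g_1, …, g_N and g̃_1, …, g̃_N be real numbers with g_i ≤ g̃_i ≤ g_i + δ for every i. Define the smoothed enclosure robustness ρ̃ = −δ_in − m̃ax_τ(g̃_1, …, g̃_N) and the exact enclosure robustness ρ = −δ_in − max_i g_i, where m̃ax_τ(x) = τ·log(∑_{i=1}^{N} exp(x_i/τ)). Then ρ − δ − τ·log N ≤ ρ̃ ≤ ρ; in particular ρ̃ > 0 implies ρ > 0. -/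
/-- Theorem 1, Case (ii) for `enclIn`: with exact signed distances `g_i` and overestimates
`g̃_i` satisfying `g_i ≤ g̃_i ≤ g_i + δ`, the smoothed enclosure robustness
`ρ̃ = −δ_in − smoothMax τ g̃` satisfies `ρ − δ − τ·log N ≤ ρ̃ ≤ ρ` where
`ρ = −δ_in − max_i g_i`; in particular `ρ̃ > 0 → ρ > 0`. -/
theorem enclIn_conservative (N : ℕ) (hN : 1 ≤ N) (τ : ℝ) (hτ : 0 < τ)
    (δin δ : ℝ) (hδ : 0 ≤ δ) (g g' : Fin N → ℝ)
    (hlo : ∀ i, g i ≤ g' i) (hhi : ∀ i, g' i ≤ g i + δ) :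
    (-δin - Finset.univ.sup' (Finset.univ_nonempty_iff.mpr (Fin.pos_iff_nonempty.mp hN)) g)
        - δ - τ * Real.log N
      ≤ -δin - smoothMax τ g' ∧
    -δin - smoothMax τ g' ≤
      -δin - Finset.univ.sup' (Finset.univ_nonempty_iff.mpr (Fin.pos_iff_nonempty.mp hN)) g ∧
    (0 < -δin - smoothMax τ g' →
      0 < -δin - Finset.univ.sup' (Finset.univ_nonempty_iff.mpr (Fin.pos_iff_nonempty.mp hN)) g) := by
  have hne : (Finset.univ : Finset (Fin N)).Nonempty :=
    Finset.univ_nonempty_iff.mpr (Fin.pos_iff_nonempty.mp hN)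
  set M := Finset.univ.sup' hne g with hM
  have hNpos : (0:ℝ) < N := by exact_mod_cast hN
  -- lower bound: M ≤ smoothMax τ g'
  obtain ⟨j, _, hj⟩ := Finset.exists_mem_eq_sup' hne g
  have hlow : M ≤ smoothMax τ g' := by
    have h1 : Real.exp (M / τ) ≤ ∑ i, Real.exp (g' i / τ) := by
      have : Real.exp (M / τ) ≤ Real.exp (g' j / τ) := by
        apply Real.exp_le_exp.mpr
        have : M ≤ g' j := by rw [hM, hj]; exact hlo j
        exact div_le_div_of_nonneg_right this hτ.le
      calc Real.exp (M / τ) ≤ Real.exp (g' j / τ) := this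
        _ ≤ ∑ i, Real.exp (g' i / τ) :=
          Finset.single_le_sum (f := fun i => Real.exp (g' i / τ))
            (fun i _ => (Real.exp_pos _).le) (Finset.mem_univ j)
    have h2 : M / τ ≤ Real.log (∑ i, Real.exp (g' i / τ)) := by
      have := Real.log_le_log (Real.exp_pos _) h1
      rwa [Real.log_exp] at this
    have := mul_le_mul_of_nonneg_left h2 hτ.le
    rwa [mul_div_cancel₀ _ hτ.ne'] at this
  -- upper bound: smoothMax τ g' ≤ M + δ + τ log N
  have hup : smoothMax τ g' ≤ M + δ + τ * Real.log N := by
    have h1 : ∑ i, Real.exp (g' i / τ) ≤ N * Real.exp ((M + δ) / τ) := by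
      calc ∑ i, Real.exp (g' i / τ) ≤ ∑ _i : Fin N, Real.exp ((M + δ) / τ) := by
            apply Finset.sum_le_sum
            intro i _
            apply Real.exp_le_exp.mpr
            apply div_le_div_of_nonneg_right _ hτ.le
            exact (hhi i).trans (add_le_add (Finset.le_sup' g (Finset.mem_univ i)) le_rfl)
        _ = N * Real.exp ((M + δ) / τ) := by simp [mul_comm]
    have hpos : (0:ℝ) < ∑ i, Real.exp (g' i / τ) :=
      Finset.sum_pos (fun i _ => Real.exp_pos _) hne
    have h2 : Real.log (∑ i, Real.exp (g' i / τ)) ≤ Real.log N + (M + δ) / τ := by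
      have := Real.log_le_log hpos h1
      rwa [Real.log_mul hNpos.ne' (Real.exp_pos _).ne', Real.log_exp] at this
    have := mul_le_mul_of_nonneg_left h2 hτ.le
    rw [smoothMax]
    calc τ * Real.log (∑ i, Real.exp (g' i / τ)) ≤ τ * (Real.log N + (M + δ) / τ) := this
      _ = M + δ + τ * Real.log N := by field_simp; ring
  refine ⟨by linarith, by linarith, fun h => by linarith⟩
end
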